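/- Let (g, d, [·,·]) be a differential graded Lie algebra over a field k of characteristic zero, η : g → g a linear map of degree −1, and μₙ the maps of Theorem 3.1. Suppose there is a degree-0 linear projection P_H : g → g with id = P_H + d∘η + η∘d. Let R be a local Artin k-algebra with maximal ideal m and let Γ ∈ (g⊗m)¹ satisfy P_H[Γ,Γ] = 0. Then μₙ(Γ,…,Γ) = 0 for every n ≥ 3. -/

import Mathlib

open Finset
open scoped TensorProduct

noncomputable section

/-- The Koszul sign `e(σ; v₁,…,vₙ)` of a permutation `σ` with respect to the (integer)
degrees `deg i` of homogeneous elements, defined by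
`v_{σ(1)} ∧ … ∧ v_{σ(n)} = (-1)^σ e(σ) v₁ ∧ … ∧ vₙ`. -/
def koszulSign (k : Type*) [Field k] {n : ℕ} (deg : Fin n → ℤ) (σ : Equiv.Perm (Fin n)) : k :=
  ∏ p ∈ Finset.univ.filter (fun p : Fin n × Fin n => p.1 < p.2 ∧ σ p.2 < σ p.1),
    (-1 : k) ^ (deg (σ p.1) * deg (σ p.2))

/-- The sign `(-1)^σ` of a permutation, as an element of the field `k`. -/
def permSign (k : Type*) [Field k] {n : ℕ} (σ : Equiv.Perm (Fin n)) : k :=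
  ((Equiv.Perm.sign σ : ℤ) : k)

/-- `Sh(p,n)`: the permutations of `{0,…,n-1}` that are strictly increasing on the first `p`
positions and on the remaining `n - p` positions. -/
def shuffles (p n : ℕ) : Finset (Equiv.Perm (Fin n)) :=
  Finset.univ.filter fun σ =>
    (∀ a b : Fin n, (a : ℕ) < (b : ℕ) → (b : ℕ) < p → σ a < σ b) ∧
    (∀ a b : Fin n, (a : ℕ) < (b : ℕ) → p ≤ (a : ℕ) → σ a < σ b)

/-- A differential graded Lie algebra over `k` on the carrier `V`, presented by its
(internal) ℤ-grading, differential `d` of degree `+1` and bracket of degree `0`,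
satisfying graded antisymmetry, the graded Jacobi identity and the graded Leibniz rule. -/
structure GradedDGLA (k V : Type*) [Field k] [AddCommGroup V] [Module k V] where
  grade : ℤ → Submodule k V
  internal : DirectSum.IsInternal grade
  d : V →ₗ[k] V
  bracket : V →ₗ[k] V →ₗ[k] V
  d_grade : ∀ (i : ℤ) (v : V), v ∈ grade i → d v ∈ grade (i + 1)
  bracket_grade : ∀ (i j : ℤ) (x y : V), x ∈ grade i → y ∈ grade j →
    bracket x y ∈ grade (i + j)
  d_sq : ∀ v : V, d (d v) = 0
  antisymm : ∀ (i j : ℤ) (x y : V), x ∈ grade i → y ∈ grade j →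
    bracket x y = -((-1 : k) ^ (i * j) • bracket y x)
  jacobi : ∀ (i j l : ℤ) (x y z : V), x ∈ grade i → y ∈ grade j → z ∈ grade l →
    (-1 : k) ^ (i * l) • bracket (bracket x y) z
      + (-1 : k) ^ (j * i) • bracket (bracket y z) x
      + (-1 : k) ^ (l * j) • bracket (bracket z x) y = 0
  leibniz : ∀ (i : ℤ) (x y : V), x ∈ grade i →
    d (bracket x y) = bracket (d x) y + (-1 : k) ^ i • bracket x (d y)

/-- The `L∞`-operations `μₙ` of Theorem 3.1, built from a differential `d`, a bracket `br`
and a degree `-1` operator `η`:  `μ₁ = d`, `μ₂ = (dη + ηd)[·,·]`, and for `n ≥ 3`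
`μₙ(v₁,…,vₙ) = (-1)ⁿ ∑_{σ ∈ Sh(n-1,n)} (-1)^σ e(σ) η[μ_{n-1}(v_{σ(1)},…,v_{σ(n-1)}), v_{σ(n)}]`.
The arguments are homogeneous of degrees recorded in `deg`. -/
def muRec {k : Type*} [Field k] {W : Type*} [AddCommGroup W] [Module k W]
    (d : W →ₗ[k] W) (br : W →ₗ[k] W →ₗ[k] W) (η : W →ₗ[k] W) :
    (n : ℕ) → (Fin n → ℤ) → (Fin n → W) → W
  | 0, _, _ => 0
  | 1, _, v => d (v 0)
  | 2, _, v => d (η (br (v 0) (v 1))) + η (d (br (v 0) (v 1)))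
  | (n + 3), deg, v =>
      (-1 : k) ^ (n + 3) •
        ∑ σ ∈ shuffles (n + 2) (n + 3),
          (permSign k σ * koszulSign k deg σ) •
            η (br
                (muRec d br η (n + 2) (fun i => deg (σ i.castSucc))
                  (fun i => v (σ i.castSucc)))
                (v (σ (Fin.last (n + 2)))))

/-- The general right-hand side `∑_{k+l=n+1} ∑_{σ ∈ Sh(k,n)} (-1)^{σ + k(l-1)} e(σ)
F_l(μ_k(v_{σ(1)},…,v_{σ(k)}), v_{σ(k+1)},…,v_{σ(n)})` appearing both in the higher Jacobi
identities (with `F = μ`) and in the `L∞`-morphism equations into an abelian dg Lie algebra. -/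
def linfRHS (k : Type*) [Field k] {W : Type*} [AddCommGroup W] [Module k W]
    (μ F : (m : ℕ) → (Fin m → ℤ) → (Fin m → W) → W)
    (n : ℕ) (deg : Fin n → ℤ) (v : Fin n → W) : W :=
  ∑ p : Fin n, ∑ σ ∈ shuffles ((p : ℕ) + 1) n,
    (permSign k σ * (-1 : k) ^ (((p : ℕ) + 1) * (n - 1 - (p : ℕ))) * koszulSign k deg σ) •
      F (n - (p : ℕ))
        (fun i =>
          if (i : ℕ) = 0 then
            (∑ j : Fin ((p : ℕ) + 1),
              deg (σ ⟨(j : ℕ), by have := j.isLt; have := p.isLt; omega⟩)) + 1 - ((p : ℕ) : ℤ)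
          else
            deg (σ ⟨(p : ℕ) + (i : ℕ), by have := i.isLt; have := p.isLt; omega⟩))
        (fun i =>
          if (i : ℕ) = 0 then
            μ ((p : ℕ) + 1)
              (fun j => deg (σ ⟨(j : ℕ), by have := j.isLt; have := p.isLt; omega⟩))
              (fun j => v (σ ⟨(j : ℕ), by have := j.isLt; have := p.isLt; omega⟩))
          else
            v (σ ⟨(p : ℕ) + (i : ℕ), by have := i.isLt; have := p.isLt; omega⟩))

/-- The `n`-th higher Jacobi expression `Φₙ` of a family `μ` of multilinear operations. -/
def higherJacobi (k : Type*) [Field k] {W : Type*} [AddCommGroup W] [Module k W]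
    (μ : (m : ℕ) → (Fin m → ℤ) → (Fin m → W) → W)
    (n : ℕ) (deg : Fin n → ℤ) (v : Fin n → W) : W :=
  linfRHS k μ μ n deg v

/-- The bracket on `V ⊗[k] R` induced by a bracket on `V` and the multiplication of `R`:
`[x ⊗ a, y ⊗ b] = [x,y] ⊗ (a*b)`. -/
def tensorBracket {k : Type*} [Field k] {V : Type*} [AddCommGroup V] [Module k V]
    {R : Type*} [CommRing R] [Algebra k R] (br : V →ₗ[k] V →ₗ[k] V) :
    (V ⊗[k] R) →ₗ[k] (V ⊗[k] R) →ₗ[k] (V ⊗[k] R) :=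
  TensorProduct.curry
    ((TensorProduct.map (TensorProduct.lift br) (LinearMap.mul' k R)).comp
      (TensorProduct.tensorTensorTensorComm k V R V R).toLinearMap)

/-- The homogeneous piece `(g ⊗ m)ⁱ = gⁱ ⊗ m` of `V ⊗[k] R`: the image of `p ⊗ q` in
`V ⊗[k] R`, for a submodule `p ⊆ V` (a graded piece) and a `k`-submodule `q ⊆ R`
(the maximal ideal). -/
def tensorGrade {k : Type*} [Field k] {V : Type*} [AddCommGroup V] [Module k V]
    {R : Type*} [CommRing R] [Algebra k R] (p : Submodule k V) (q : Submodule k R) :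
    Submodule k (V ⊗[k] R) :=
  LinearMap.range (TensorProduct.map p.subtype q.subtype)

/-- The maximal ideal of a local `k`-algebra, viewed as a `k`-submodule. -/
def maxIdealSub (k : Type*) [Field k] (R : Type*) [CommRing R] [Algebra k R]
    [IsLocalRing R] : Submodule k R :=
  Submodule.restrictScalars k (IsLocalRing.maximalIdeal R)

/-- The coefficient `(-1)^{n(n+1)/2} / n!` of the `L∞` Maurer–Cartan equation. -/
def mcCoeff (k : Type*) [Field k] (n : ℕ) : k :=
  (-1 : k) ^ (n * (n + 1) / 2) / (n.factorial : k)

/-! For `Γ` of degree one with `P_H[Γ,Γ] = 0` the homotopy `dη + ηd = id - P_H` gives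
`μ₂(Γ,Γ) = [Γ,Γ]`, so every term of `μ₃(Γ,Γ,Γ)` is a multiple of `η[[Γ,Γ],Γ]`. For odd elements
the graded Jacobi identity reads `3[[Γ,Γ],Γ] = 0`, and in characteristic zero this kills `μ₃`.
Since `μₙ(Γ,…,Γ)` is a combination of terms `η[μₙ₋₁(Γ,…,Γ),Γ]`, the vanishing propagates to all
`n ≥ 3`. -/

section Tensor

variable {k : Type*} [Field k] {V : Type*} [AddCommGroup V] [Module k V]

theorem tensorBracket_tmul {R : Type*} [CommRing R] [Algebra k R]
    (br : V →ₗ[k] V →ₗ[k] V) (v w : V) (a b : R) :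
    tensorBracket br (v ⊗ₜ[k] a) (w ⊗ₜ[k] b) = br v w ⊗ₜ[k] (a * b) := by
  simp [tensorBracket, TensorProduct.tensorTensorTensorComm_tmul]

theorem rTensor_homotopy {M : Type*} [AddCommGroup M] [Module k M] {P d η : V →ₗ[k] V}
    (hHodge : ∀ v, P v + d (η v) + η (d v) = v) (x : V ⊗[k] M) :
    d.rTensor M (η.rTensor M x) + η.rTensor M (d.rTensor M x) = x - P.rTensor M x := by
  have hid : P + d ∘ₗ η + η ∘ₗ d = LinearMap.id := LinearMap.ext hHodge
  have := congrArg (fun f : V →ₗ[k] V => f.rTensor M x) hid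
  simp only [LinearMap.rTensor_add, LinearMap.rTensor_comp, LinearMap.rTensor_id,
    LinearMap.add_apply, LinearMap.comp_apply, LinearMap.id_apply] at this
  linear_combination (norm := module) this

theorem GradedDGLA.jacobi_of_mem_grade_one (D : GradedDGLA k V) {x y z : V}
    (hx : x ∈ D.grade 1) (hy : y ∈ D.grade 1) (hz : z ∈ D.grade 1) :
    D.bracket (D.bracket x y) z + D.bracket (D.bracket y z) x
      + D.bracket (D.bracket z x) y = 0 := by
  have h := D.jacobi 1 1 1 x y z hx hy hz
  simp only [mul_one, zpow_one, neg_one_smul] at h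
  linear_combination (norm := module) -h

variable {R : Type*} [CommRing R] [Algebra k R]

theorem GradedDGLA.tensorBracket_jacobi_of_mem_tensorGrade_one (D : GradedDGLA k V)
    (q : Submodule k R) {x y z : V ⊗[k] R} (hx : x ∈ tensorGrade (D.grade 1) q)
    (hy : y ∈ tensorGrade (D.grade 1) q) (hz : z ∈ tensorGrade (D.grade 1) q) :
    tensorBracket D.bracket (tensorBracket D.bracket x y) z
      + tensorBracket D.bracket (tensorBracket D.bracket y z) x
      + tensorBracket D.bracket (tensorBracket D.bracket z x) y = 0 := by
  obtain ⟨s, rfl⟩ := hx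
  obtain ⟨t, rfl⟩ := hy
  obtain ⟨u, rfl⟩ := hz
  induction s using TensorProduct.induction_on with
  | zero => simp
  | add s₁ s₂ h₁ h₂ =>
    simp only [map_add, LinearMap.add_apply]
    linear_combination (norm := module) h₁ + h₂
  | tmul a ra =>
  induction t using TensorProduct.induction_on with
  | zero => simp
  | add t₁ t₂ h₁ h₂ =>
    simp only [map_add, LinearMap.add_apply]
    linear_combination (norm := module) h₁ + h₂
  | tmul b rb =>
  induction u using TensorProduct.induction_on with
  | zero => simp
  | add u₁ u₂ h₁ h₂ =>
    simp only [map_add, LinearMap.add_apply]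
    linear_combination (norm := module) h₁ + h₂
  | tmul c rc =>
    simp only [TensorProduct.map_tmul, Submodule.subtype_apply, tensorBracket_tmul]
    rw [show (rb : R) * rc * ra = ra * rb * rc by ring,
      show (rc : R) * ra * rb = ra * rb * rc by ring, ← TensorProduct.add_tmul,
      ← TensorProduct.add_tmul, D.jacobi_of_mem_grade_one a.2 b.2 c.2, TensorProduct.zero_tmul]

theorem GradedDGLA.tensorBracket_bracket_self_self_eq_zero [CharZero k] (D : GradedDGLA k V)
    (q : Submodule k R) {Γ : V ⊗[k] R} (hΓ : Γ ∈ tensorGrade (D.grade 1) q) :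
    tensorBracket D.bracket (tensorBracket D.bracket Γ Γ) Γ = 0 := by
  have h := D.tensorBracket_jacobi_of_mem_tensorGrade_one q hΓ hΓ hΓ
  have h3 : (3 : k) • tensorBracket D.bracket (tensorBracket D.bracket Γ Γ) Γ = 0 := by
    linear_combination (norm := module) h
  exact (smul_eq_zero.mp h3).resolve_left three_ne_zero

end Tensor

theorem muRec_const_eq_zero {k : Type*} [Field k] {W : Type*} [AddCommGroup W] [Module k W]
    (d : W →ₗ[k] W) (br : W →ₗ[k] W →ₗ[k] W) (η : W →ₗ[k] W) (c : ℤ) (w : W)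
    (h₃ : η (br (muRec d br η 2 (fun _ => c) (fun _ => w)) w) = 0) :
    ∀ n, 3 ≤ n → muRec d br η n (fun _ => c) (fun _ => w) = 0 := by
  have step : ∀ m, η (br (muRec d br η (m + 2) (fun _ => c) (fun _ => w)) w) = 0 →
      muRec d br η (m + 3) (fun _ => c) (fun _ => w) = 0 := fun m hm => by
    rw [muRec]
    exact smul_eq_zero_of_right _ (sum_eq_zero fun σ _ => by rw [hm, smul_zero])
  intro n hn
  obtain ⟨m, rfl⟩ := Nat.exists_eq_add_of_le' hn
  induction m with
  | zero => exact step 0 h₃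
  | succ m ih =>
    exact step (m + 1) (by rw [ih (by omega), map_zero, LinearMap.zero_apply, map_zero])

theorem statement7_general {k V : Type*} [Field k] [CharZero k] [AddCommGroup V] [Module k V]
    (D : GradedDGLA k V) (η : V →ₗ[k] V)
    (P : V →ₗ[k] V)
    (hHodge : ∀ v : V, P v + D.d (η v) + η (D.d v) = v)
    (R : Type*) [CommRing R] [Algebra k R] [IsLocalRing R]
    (Γ : V ⊗[k] R) (hΓ : Γ ∈ tensorGrade (D.grade 1) (maxIdealSub k R))
    (hPΓΓ : (LinearMap.rTensor R P) (tensorBracket D.bracket Γ Γ) = 0) :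
    ∀ n : ℕ, 3 ≤ n →
      muRec (LinearMap.rTensor R D.d) (tensorBracket D.bracket) (LinearMap.rTensor R η)
        n (fun _ => (1 : ℤ)) (fun _ => Γ) = 0 := by
  apply muRec_const_eq_zero
  have hμ₂ : muRec (LinearMap.rTensor R D.d) (tensorBracket D.bracket) (LinearMap.rTensor R η)
      2 (fun _ => (1 : ℤ)) (fun _ => Γ) = tensorBracket D.bracket Γ Γ := by
    rw [muRec, rTensor_homotopy hHodge, hPΓΓ, sub_zero]
  rw [hμ₂, D.tensorBracket_bracket_self_self_eq_zero _ hΓ, map_zero]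

theorem statement7 {k V : Type*} [Field k] [CharZero k] [AddCommGroup V] [Module k V]
    (D : GradedDGLA k V) (η : V →ₗ[k] V)
    (hη : ∀ (i : ℤ) (v : V), v ∈ D.grade i → η v ∈ D.grade (i - 1))
    (P : V →ₗ[k] V) (hP : ∀ (i : ℤ) (v : V), v ∈ D.grade i → P v ∈ D.grade i)
    (hPproj : ∀ v : V, P (P v) = P v)
    (hHodge : ∀ v : V, P v + D.d (η v) + η (D.d v) = v)
    (R : Type*) [CommRing R] [Algebra k R] [IsLocalRing R] [IsArtinianRing R]
    (Γ : V ⊗[k] R) (hΓ : Γ ∈ tensorGrade (D.grade 1) (maxIdealSub k R))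
    (hPΓΓ : (LinearMap.rTensor R P) (tensorBracket D.bracket Γ Γ) = 0) :
    ∀ n : ℕ, 3 ≤ n →
      muRec (LinearMap.rTensor R D.d) (tensorBracket D.bracket) (LinearMap.rTensor R η)
        n (fun _ => (1 : ℤ)) (fun _ => Γ) = 0 :=
  statement7_general D η P hHodge R Γ hΓ hPΓΓ
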